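/- For any instance I=(p_t)_{t∈[n]}, any prediction Î=(p̂_t)_{t∈[n]}, and any subset S ⊆ [n], τ([1,n], I, I_S ∪ Î_{[n]∖S}) ≤ τ([1,n], I, Î); that is, replacing any subset of predicted values with the true demand values does not increase the auxiliary error (Monotonicity). -/

import Mathlib

open Finset

/-- Waiting time from `t` until the first acknowledgment in `X` at or after `t` (`0` if none). -/
noncomputable def ackWait (X : Finset ℕ) (t : ℕ) : ℕ :=
  if h : (X.filter fun x => t ≤ x).Nonempty then (X.filter fun x => t ≤ x).min' h - t else 0

/-- Delay cost `D(I,X)` of solution `X` for the instance `p` on horizon `{a, …, b}`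
with delay parameter `d`. -/
noncomputable def delayCost (d : ℝ) (a b : ℕ) (p : ℕ → ℝ) (X : Finset ℕ) : ℝ :=
  (1 / d) * ∑ t ∈ Finset.Icc a b, p t * (ackWait X t : ℝ)

/-- Total cost `F(I,X) = |X| + D(I,X)`. -/
noncomputable def cost (d : ℝ) (a b : ℕ) (p : ℕ → ℝ) (X : Finset ℕ) : ℝ :=
  (X.card : ℝ) + delayCost d a b p X

/-- Feasibility of `X` for the instance `p` on horizon `{a,…,b}`: `X` is a nonempty subset of
the horizon and every time with positive demand has an acknowledgment at or after it. -/
def Feasible (a b : ℕ) (p : ℕ → ℝ) (X : Finset ℕ) : Prop :=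
  X.Nonempty ∧ X ⊆ Finset.Icc a b ∧ ∀ t ∈ Finset.Icc a b, 0 < p t → ∃ x ∈ X, t ≤ x

/-- Optimal cost `opt(I)` of the instance `p` on horizon `{a,…,b}`. -/
noncomputable def opt (d : ℝ) (a b : ℕ) (p : ℕ → ℝ) : ℝ :=
  sInf {c : ℝ | ∃ X : Finset ℕ, Feasible a b p X ∧ cost d a b p X = c}

/-- `Δ(I,Y,t) = D(I,Y) − D(I,Y ∪ {t})`. -/
noncomputable def delta (d : ℝ) (a b : ℕ) (p : ℕ → ℝ) (Y : Finset ℕ) (t : ℕ) : ℝ :=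
  delayCost d a b p Y - delayCost d a b p (insert t Y)

/-- Auxiliary error `τ([t1,t2], I, Î) = opt(O(I⟨t1,t2⟩,Î⟨t1,t2⟩)) − opt(U(I⟨t1,t2⟩,Î⟨t1,t2⟩))`. -/
noncomputable def auxErr (d : ℝ) (t1 t2 : ℕ) (p q : ℕ → ℝ) : ℝ :=
  opt d t1 t2 (fun t => max (p t) (q t)) - opt d t1 t2 (fun t => min (p t) (q t))

lemma delayCost_nonneg {d : ℝ} (hd : 0 ≤ d) (a b : ℕ) {p : ℕ → ℝ} (hp : 0 ≤ p)
    (X : Finset ℕ) : 0 ≤ delayCost d a b p X :=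
  mul_nonneg (by positivity) (sum_nonneg fun t _ => mul_nonneg (hp t) (Nat.cast_nonneg _))

lemma cost_nonneg {d : ℝ} (hd : 0 ≤ d) (a b : ℕ) {p : ℕ → ℝ} (hp : 0 ≤ p)
    (X : Finset ℕ) : 0 ≤ cost d a b p X :=
  add_nonneg (Nat.cast_nonneg _) (delayCost_nonneg hd a b hp X)

lemma cost_mono {d : ℝ} (hd : 0 ≤ d) (a b : ℕ) {p p' : ℕ → ℝ} (h : p ≤ p')
    (X : Finset ℕ) : cost d a b p X ≤ cost d a b p' X := by
  unfold cost delayCost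
  gcongr with t
  exact h t

lemma Feasible.of_le {a b : ℕ} {p p' : ℕ → ℝ} {X : Finset ℕ} (hX : Feasible a b p' X)
    (h : p ≤ p') : Feasible a b p X :=
  ⟨hX.1, hX.2.1, fun t ht hpt => hX.2.2 t ht (hpt.trans_le (h t))⟩

lemma feasible_singleton {a b : ℕ} (hab : a ≤ b) (p : ℕ → ℝ) : Feasible a b p {b} :=
  ⟨singleton_nonempty b, by simpa using hab,
    fun t ht _ => ⟨b, mem_singleton_self b, (mem_Icc.mp ht).2⟩⟩

lemma opt_le_cost {d : ℝ} (hd : 0 ≤ d) {a b : ℕ} {p : ℕ → ℝ} (hp : 0 ≤ p) {X : Finset ℕ}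
    (hX : Feasible a b p X) : opt d a b p ≤ cost d a b p X :=
  csInf_le ⟨0, by rintro _ ⟨Y, -, rfl⟩; exact cost_nonneg hd a b hp Y⟩ ⟨X, hX, rfl⟩

-- An empty horizon admits no feasible solution, and `sInf ∅ = 0` in `ℝ`.
lemma opt_of_lt (d : ℝ) {a b : ℕ} (hba : b < a) (p : ℕ → ℝ) : opt d a b p = 0 := by
  have hX : ∀ X : Finset ℕ, ¬ Feasible a b p X := fun X ⟨hne, hsub, _⟩ =>
    hne.ne_empty (subset_empty.mp (Icc_eq_empty_of_lt hba ▸ hsub))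
  simp [opt, hX]

lemma opt_mono {d : ℝ} (hd : 0 ≤ d) (a b : ℕ) {p p' : ℕ → ℝ} (hp : 0 ≤ p) (h : p ≤ p') :
    opt d a b p ≤ opt d a b p' := by
  rcases lt_or_ge b a with hba | hab
  · rw [opt_of_lt d hba, opt_of_lt d hba]
  · refine le_csInf ⟨_, _, feasible_singleton hab p', rfl⟩ ?_
    rintro _ ⟨X, hX, rfl⟩
    exact (opt_le_cost hd hp (hX.of_le h)).trans (cost_mono hd a b h X)

theorem auxErr_monotone_general (d : ℝ) (hd : 0 < d) (n : ℕ) (p q : ℕ → ℝ)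
    (hp : ∀ t, 0 ≤ p t) (hq : ∀ t, 0 ≤ q t)
    (S : Finset ℕ) :
    auxErr d 1 n p (fun t => if t ∈ S then p t else q t) ≤ auxErr d 1 n p q := by
  have hmax : ∀ t, max (p t) (if t ∈ S then p t else q t) ≤ max (p t) (q t) := fun t => by
    split_ifs <;> simp
  have hmin : ∀ t, min (p t) (q t) ≤ min (p t) (if t ∈ S then p t else q t) := fun t => by
    split_ifs <;> simp
  exact sub_le_sub (opt_mono hd.le 1 n (fun t => (hp t).trans (le_max_left _ _)) hmax)
    (opt_mono hd.le 1 n (fun t => le_min (hp t) (hq t)) hmin)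

/-- Monotonicity of the auxiliary error: replacing the predicted values on any
subset `S ⊆ [n]` by the true demand values does not increase `τ([1,n],·,·)`. -/
theorem auxErr_monotone (d : ℝ) (hd : 0 < d) (n : ℕ) (p q : ℕ → ℝ)
    (hp : ∀ t, 0 ≤ p t) (hq : ∀ t, 0 ≤ q t)
    (S : Finset ℕ) (hS : S ⊆ Finset.Icc 1 n) :
    auxErr d 1 n p (fun t => if t ∈ S then p t else q t) ≤ auxErr d 1 n p q :=
  auxErr_monotone_general d hd n p q hp hq S
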